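/- arXiv:2602.12697 — 3 statements merged into one kernel-verified Lean document; each statement's English description precedes it below -/
import Mathlib

section
/- Let S_v, S_z, L, C, D be complex matrices with D invertible, and suppose X is an invertible solution of the Sylvester equation −S_z*X − XS_v + Lᵀ(L + D⁻¹C) = 0. Define à := S_v − X⁻¹LᵀL, B̃ := X⁻¹Lᵀ, C̃ := C. Then à − B̃D⁻¹C̃ = −X⁻¹S_z*X, so the eigenvalues of à − B̃D⁻¹C̃ coincide with those of −S_z*. -/
open Matrix

theorem zero_placement_similarity {n m : ℕ}
    (Sv Sz X : Matrix (Fin n) (Fin n) ℂ) (L C : Matrix (Fin m) (Fin n) ℂ)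
    (D : Matrix (Fin m) (Fin m) ℂ) (hD : IsUnit D) (hX : IsUnit X)
    (hsyl : -(Szᴴ * X) - X * Sv + Lᵀ * (L + D⁻¹ * C) = 0) :
    (Sv - X⁻¹ * (Lᵀ * L)) - (X⁻¹ * Lᵀ) * D⁻¹ * C = -(X⁻¹ * Szᴴ * X) ∧
    spectrum ℂ ((Sv - X⁻¹ * (Lᵀ * L)) - (X⁻¹ * Lᵀ) * D⁻¹ * C) = spectrum ℂ (-Szᴴ) := by
  have hXi : X⁻¹ * X = 1 := nonsing_inv_mul X (isUnit_iff_isUnit_det X |>.mp hX)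
  have key : (Sv - X⁻¹ * (Lᵀ * L)) - (X⁻¹ * Lᵀ) * D⁻¹ * C = -(X⁻¹ * Szᴴ * X) := by
    have h2 : X * Sv - Lᵀ * L - Lᵀ * (D⁻¹ * C) = -(Szᴴ * X) := by
      have h := hsyl
      rw [Matrix.mul_add] at h
      rw [← sub_eq_zero,
        show X * Sv - Lᵀ * L - Lᵀ * (D⁻¹ * C) - -(Szᴴ * X)
          = -(-(Szᴴ * X) - X * Sv + (Lᵀ * L + Lᵀ * (D⁻¹ * C))) from by abel, h, neg_zero]
    calc (Sv - X⁻¹ * (Lᵀ * L)) - (X⁻¹ * Lᵀ) * D⁻¹ * C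
        = X⁻¹ * (X * Sv - Lᵀ * L - Lᵀ * (D⁻¹ * C)) := by
          rw [mul_sub, mul_sub, ← mul_assoc, hXi, one_mul]
          rw [Matrix.mul_assoc, Matrix.mul_assoc]
      _ = X⁻¹ * -(Szᴴ * X) := by rw [h2]
      _ = -(X⁻¹ * Szᴴ * X) := by rw [mul_neg, mul_assoc]
  refine ⟨key, ?_⟩
  rw [key]
  lift X to (Matrix (Fin n) (Fin n) ℂ)ˣ using hX with U
  rw [← Matrix.coe_units_inv U]
  have : -((↑U⁻¹ : Matrix (Fin n) (Fin n) ℂ) * Szᴴ * U) = (↑U⁻¹ : Matrix (Fin n) (Fin n) ℂ) * (-Szᴴ) * U := by rw [mul_neg, neg_mul]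
  rw [this, spectrum.units_conjugate']
end

section
/- Let S_sp, S_v, Q be complex n×n matrices and L an m×n matrix, and let X be an invertible solution of −S_sp*X − X(S_v − Q) + LᵀL = 0. Define à := S_v − X⁻¹LᵀL. Then à − Q = −X⁻¹S_sp*X, so à − Q is similar to −S_sp*. -/
open Matrix

theorem shifted_pole_placement_similarity {n m : ℕ}
    (Ssp Sv Q X : Matrix (Fin n) (Fin n) ℂ) (L : Matrix (Fin m) (Fin n) ℂ)
    (hX : IsUnit X)
    (hsyl : -(Sspᴴ * X) - X * (Sv - Q) + Lᵀ * L = 0) :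
    (Sv - X⁻¹ * (Lᵀ * L)) - Q = -(X⁻¹ * Sspᴴ * X) ∧
    spectrum ℂ ((Sv - X⁻¹ * (Lᵀ * L)) - Q) = spectrum ℂ (-Sspᴴ) := by
  have hLL : Lᵀ * L = Sspᴴ * X + X * (Sv - Q) := by
    linear_combination (norm := noncomm_ring) hsyl
  have hinv : X⁻¹ * X = 1 := nonsing_inv_mul X (isUnit_iff_isUnit_det X |>.mp hX)
  have key : (Sv - X⁻¹ * (Lᵀ * L)) - Q = -(X⁻¹ * Sspᴴ * X) := by
    rw [hLL]
    have : X⁻¹ * (Sspᴴ * X + X * (Sv - Q)) = X⁻¹ * Sspᴴ * X + (Sv - Q) := by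
      rw [mul_add, ← mul_assoc, ← mul_assoc, hinv, one_mul]
    rw [this]; noncomm_ring
  refine ⟨key, ?_⟩
  rw [key]
  obtain ⟨u, rfl⟩ := hX
  have hu : (↑u : Matrix (Fin n) (Fin n) ℂ)⁻¹ = ↑u⁻¹ := (Matrix.coe_units_inv u).symm
  have h2 : -((u : Matrix (Fin n) (Fin n) ℂ)⁻¹ * Sspᴴ * (u : Matrix (Fin n) (Fin n) ℂ)) = (↑u⁻¹ : Matrix (Fin n) (Fin n) ℂ) * (-Sspᴴ) * (u : Matrix (Fin n) (Fin n) ℂ) := by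
    rw [hu]; noncomm_ring
  rw [h2, spectrum.units_conjugate']
end

section
/- Let n_s ≥ 2, ω_1,…,ω_{n_s} distinct reals with minimal gap Δ_min > 0, ε ≤ Δ_min/(2n_s), and let Q = [Q_{ij}] and X = [X_{ij}] be block matrices of m×m complex blocks satisfying (ε + i(ω_j − ω_i)) X_{ij} + Σ_k X_{ik} Q_{kj} = δ_{ij} I_m for all i,j, where δ is Kronecker's delta. Suppose max_{i,j} ‖Q_{ij}‖ ≤ η ε with 0 < η ≤ 1/(6 n_s). Then the row block sums r_i := Σ_k ‖X_{ik}‖ satisfy r_i ≤ 12/(7ε) < 2/ε for every i. -/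
open Complex Matrix
open scoped Matrix.Norms.L2Operator

/-!
Fix a block row `i` and let `r = ∑ₖ ‖X i k‖`. Solving the `(i, j)` equation for the scaled block
`(ε + I (ωⱼ - ωᵢ)) • X i j` and taking norms gives `ε ‖X i i‖ ≤ 1 + η ε r` on the diagonal and
`Δ ‖X i j‖ ≤ η ε r` off it. As `Δ ≥ 2 nₛ ε`, summing over `j` yields `r ≤ 1/ε + (3/2) η r`, and
`η ≤ 1/12` turns this into `r ≤ 8 / (7 ε)`.
-/

theorem Finset.sum_le_of_le_at_of_le_of_ne {ι M : Type*} [Fintype ι] [DecidableEq ι]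
    [AddCommMonoid M] [PartialOrder M] [IsOrderedAddMonoid M] {a : ι → M} {i : ι} {u v : M}
    (hi : a i ≤ u) (hne : ∀ j ≠ i, a j ≤ v) :
    ∑ j, a j ≤ u + (Fintype.card ι - 1) • v := by
  rw [← Finset.add_sum_erase _ _ (Finset.mem_univ i)]
  gcongr
  calc ∑ j ∈ Finset.univ.erase i, a j
      ≤ (Finset.univ.erase i).card • v :=
        Finset.sum_le_card_nsmul _ _ _ fun j hj => hne j (Finset.ne_of_mem_erase hj)
    _ = (Fintype.card ι - 1) • v := by
        rw [Finset.card_erase_of_mem (Finset.mem_univ i), Finset.card_univ]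

theorem norm_smul_le_of_smul_add_sum_mul_eq {𝕜 A ι : Type*} [NormedField 𝕜]
    [SeminormedRing A] [NormedSpace 𝕜 A] [Fintype ι] {c : 𝕜} {x d : A} {y q : ι → A} {b : ℝ}
    (hq : ∀ k, ‖q k‖ ≤ b) (h : c • x + ∑ k, y k * q k = d) :
    ‖c‖ * ‖x‖ ≤ ‖d‖ + b * ∑ k, ‖y k‖ := by
  have hx : c • x = d - ∑ k, y k * q k := eq_sub_of_add_eq h
  calc ‖c‖ * ‖x‖ = ‖d - ∑ k, y k * q k‖ := by rw [← norm_smul, hx]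
    _ ≤ ‖d‖ + ∑ k, ‖y k‖ * b := by
        refine (norm_sub_le _ _).trans (add_le_add le_rfl ?_)
        refine (norm_sum_le _ _).trans (Finset.sum_le_sum fun k _ => ?_)
        exact (norm_mul_le _ _).trans (by gcongr; exact hq k)
    _ = ‖d‖ + b * ∑ k, ‖y k‖ := by rw [← Finset.sum_mul, mul_comm]

theorem Matrix.l2_opNorm_one_le {n 𝕜 : Type*} [RCLike 𝕜] [Fintype n] [DecidableEq n] :
    ‖(1 : Matrix n n 𝕜)‖ ≤ 1 := by
  rw [cstar_norm_def, map_one, ContinuousLinearMap.one_def]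
  exact ContinuousLinearMap.norm_id_le

theorem abs_sub_le_norm_ofReal_add_I_mul (s a b : ℝ) :
    |b - a| ≤ ‖(s : ℂ) + I * ((b : ℂ) - (a : ℂ))‖ := by
  simpa using abs_im_le_norm ((s : ℂ) + I * ((b : ℂ) - (a : ℂ)))

theorem le_div_one_sub_of_le_add_mul {r a θ : ℝ} (hθ : θ < 1) (h : r ≤ a + θ * r) :
    r ≤ a / (1 - θ) := by
  rw [le_div_iff₀ (sub_pos.2 hθ)]
  linarith

theorem row_block_sum_bound_general {ns m : ℕ} (hns : 2 ≤ ns)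
    (ω : Fin ns → ℝ)
    (Δ : ℝ) (hgap : ∀ i j, i ≠ j → Δ ≤ |ω i - ω j|)
    (ε : ℝ) (hε : 0 < ε) (hεΔ : ε ≤ Δ / (2 * (ns : ℝ)))
    (η : ℝ) (hη : 0 < η) (hη' : η ≤ 1 / (6 * (ns : ℝ)))
    (Q X : Fin ns → Fin ns → Matrix (Fin m) (Fin m) ℂ)
    (hQ : ∀ i j, ‖Q i j‖ ≤ η * ε)
    (heq : ∀ i j, ((ε : ℂ) + Complex.I * ((ω j : ℂ) - (ω i : ℂ))) • X i j
        + ∑ k, X i k * Q k j = if i = j then 1 else 0) :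
    ∀ i, (∑ k, ‖X i k‖) ≤ 12 / (7 * ε) ∧ (∑ k, ‖X i k‖) < 2 / ε := by
  intro i
  set r := ∑ k, ‖X i k‖
  have hns' : (2 : ℝ) ≤ ns := by exact_mod_cast hns
  have hrow j := norm_smul_le_of_smul_add_sum_mul_eq (fun k => hQ k j) (heq i j)
  have hdiag : ‖X i i‖ ≤ 1 / ε + η * r := by
    have h := hrow i
    simp only [sub_self, mul_zero, add_zero, if_pos, norm_real, Real.norm_of_nonneg hε.le] at h
    rw [div_add' _ _ _ hε.ne', le_div_iff₀' hε]
    linarith [l2_opNorm_one_le (n := Fin m) (𝕜 := ℂ)]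
  have hoff : ∀ j ≠ i, ‖X i j‖ ≤ η * r / (2 * ns) := by
    intro j hji
    have h := hrow j
    simp only [if_neg hji.symm, norm_zero, zero_add] at h
    have hεΔ' : 2 * ns * ε ≤ Δ := by rwa [le_div_iff₀' (by positivity)] at hεΔ
    have hc := (hgap j i hji).trans (abs_sub_le_norm_ofReal_add_I_mul ε (ω i) (ω j))
    rw [le_div_iff₀' (by positivity)]
    nlinarith [norm_nonneg (X i j)]
  have hsum : r ≤ 1 / ε + 3 / 2 * η * r := by
    have hsplit := Finset.sum_le_of_le_at_of_le_of_ne (a := fun j => ‖X i j‖) hdiag hoff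
    have hcard : (ns - 1) • (η * r / (2 * ns)) ≤ η * r / 2 := by
      calc (ns - 1) • (η * r / (2 * ns)) ≤ ns • (η * r / (2 * ns)) :=
            nsmul_le_nsmul_left (by positivity) (Nat.sub_le ns 1)
        _ = η * r / 2 := by rw [nsmul_eq_mul]; field_simp
    simp only [Fintype.card_fin] at hsplit
    linarith
  have hη12 : η ≤ 1 / 12 :=
    hη'.trans (one_div_le_one_div_of_le (by norm_num) (by linarith))
  have hr : r ≤ 8 / (7 * ε) :=
    calc r ≤ 1 / ε / (1 - 3 / 2 * η) := le_div_one_sub_of_le_add_mul (by linarith) hsum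
      _ ≤ 1 / ε / (7 / 8) := by gcongr; linarith
      _ = 8 / (7 * ε) := by field_simp
  refine ⟨hr.trans ?_, hr.trans_lt ?_⟩
  · gcongr; norm_num
  · rw [div_lt_div_iff₀ (by positivity) hε]; linarith

theorem row_block_sum_bound {ns m : ℕ} (hns : 2 ≤ ns)
    (ω : Fin ns → ℝ) (hω : Function.Injective ω)
    (Δ : ℝ) (hΔ : 0 < Δ) (hgap : ∀ i j, i ≠ j → Δ ≤ |ω i - ω j|)
    (ε : ℝ) (hε : 0 < ε) (hεΔ : ε ≤ Δ / (2 * (ns : ℝ)))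
    (η : ℝ) (hη : 0 < η) (hη' : η ≤ 1 / (6 * (ns : ℝ)))
    (Q X : Fin ns → Fin ns → Matrix (Fin m) (Fin m) ℂ)
    (hQ : ∀ i j, ‖Q i j‖ ≤ η * ε)
    (heq : ∀ i j, ((ε : ℂ) + Complex.I * ((ω j : ℂ) - (ω i : ℂ))) • X i j
        + ∑ k, X i k * Q k j = if i = j then 1 else 0) :
    ∀ i, (∑ k, ‖X i k‖) ≤ 12 / (7 * ε) ∧ (∑ k, ‖X i k‖) < 2 / ε :=
  row_block_sum_bound_general hns ω Δ hgap ε hε hεΔ η hη hη' Q X hQ heq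
end
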